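/- A Barański sponge K in ℝ^d is connected if and only if Q_{d+1} is connected, where Q₀ = [0,1]^d and Q_n = ⋃_{w∈D} ψ_w(Q_{n−1}). -/

import Mathlib

open Set

noncomputable def psiB {d : ℕ} (p : Fin d → ℕ → ℝ) (w : Fin d → ℕ)
    (x : Fin d → ℝ) : Fin d → ℝ :=
  fun i => p i (w i) * x i + ∑ l ∈ Finset.Ico 1 (w i), p i l

noncomputable def psiBW {d : ℕ} (p : Fin d → ℕ → ℝ) (l : List (Fin d → ℕ)) :
    (Fin d → ℝ) → (Fin d → ℝ) :=
  l.foldr (fun w g => psiB p w ∘ g) id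

def piB {d : ℕ} (Nv : Fin d → ℕ) (l : List (Fin d → ℕ)) (i : Fin d) : ℤ :=
  l.foldl (fun acc w => (Nv i : ℤ) * acc + (w i : ℤ)) 0

def BWords {d : ℕ} (D : Finset (Fin d → ℕ)) (k : ℕ) : Set (List (Fin d → ℕ)) :=
  {l | l.length = k ∧ ∀ w ∈ l, w ∈ D}

def BSetup (d : ℕ) (Nv : Fin d → ℕ) (p : Fin d → ℕ → ℝ)
    (D : Finset (Fin d → ℕ)) : Prop :=
  2 ≤ d ∧ (∀ i, 2 ≤ Nv i) ∧ (∀ i j, 1 ≤ j → j ≤ Nv i → 0 < p i j) ∧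
    (∀ i, ∑ j ∈ Finset.Icc 1 (Nv i), p i j = 1) ∧
    (∀ w ∈ D, ∀ i, 1 ≤ w i ∧ w i ≤ Nv i) ∧ 1 < D.card ∧ D.card < ∏ i, Nv i

def IsBAttractor {d : ℕ} (p : Fin d → ℕ → ℝ) (D : Finset (Fin d → ℕ))
    (K : Set (Fin d → ℝ)) : Prop :=
  K.Nonempty ∧ IsCompact K ∧ K = ⋃ w ∈ D, psiB p w '' K

def Q0B (d : ℕ) : Set (Fin d → ℝ) := Set.univ.pi fun _ => Set.Icc (0 : ℝ) 1

noncomputable def qB {d : ℕ} (p : Fin d → ℕ → ℝ) (i : Fin d) (j : ℕ) : ℝ :=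
  ∑ l ∈ Finset.Ico 1 j, p i l

section
variable {d : ℕ} {Nv : Fin d → ℕ} {p : Fin d → ℕ → ℝ} {D : Finset (Fin d → ℕ)}

lemma psiB_apply (w : Fin d → ℕ) (x : Fin d → ℝ) (i : Fin d) :
    psiB p w x i = p i (w i) * x i + qB p i (w i) := rfl

lemma qB_one (i : Fin d) : qB p i 1 = 0 := by simp [qB]

lemma qB_succ (i : Fin d) {j : ℕ} (h1 : 1 ≤ j) :
    qB p i (j + 1) = qB p i j + p i j := by
  simp [qB, Finset.sum_Ico_succ_top h1]

lemma qB_strict (hB : BSetup d Nv p D) (i : Fin d) {j k : ℕ} (h1 : 1 ≤ j)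
    (hjk : j < k) (hk : k ≤ Nv i + 1) : qB p i j < qB p i k := by
  have hsum : qB p i j + ∑ l ∈ Finset.Ico j k, p i l = qB p i k := by
    simpa [qB] using Finset.sum_Ico_consecutive (fun l => p i l) h1 (le_of_lt hjk)
  have hpos : 0 < ∑ l ∈ Finset.Ico j k, p i l := by
    apply Finset.sum_pos
    · intro l hl
      simp only [Finset.mem_Ico] at hl
      exact hB.2.2.1 i l (le_trans h1 hl.1) (by omega)
    · exact ⟨j, by simp [Finset.mem_Ico, hjk]⟩
  linarith

lemma qB_mono (hB : BSetup d Nv p D) (i : Fin d) {j k : ℕ} (h1 : 1 ≤ j)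
    (hjk : j ≤ k) (hk : k ≤ Nv i + 1) : qB p i j ≤ qB p i k := by
  rcases eq_or_lt_of_le hjk with h | h
  · rw [h]
  · exact le_of_lt (qB_strict hB i h1 h hk)

lemma qB_nonneg (hB : BSetup d Nv p D) (i : Fin d) {j : ℕ} (hj : j ≤ Nv i + 1) :
    0 ≤ qB p i j := by
  apply Finset.sum_nonneg
  intro l hl
  simp only [Finset.mem_Ico] at hl
  exact le_of_lt (hB.2.2.1 i l hl.1 (by omega))

lemma qB_top (hB : BSetup d Nv p D) (i : Fin d) : qB p i (Nv i + 1) = 1 := by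
  rw [qB, Finset.Ico_add_one_right_eq_Icc]
  exact hB.2.2.2.1 i

lemma p_pos (hB : BSetup d Nv p D) (i : Fin d) {a : ℕ} (h1 : 1 ≤ a)
    (h2 : a ≤ Nv i) : 0 < p i a := hB.2.2.1 i a h1 h2

lemma p_lt_one (hB : BSetup d Nv p D) (i : Fin d) {a : ℕ} (h1 : 1 ≤ a)
    (h2 : a ≤ Nv i) : p i a < 1 := by
  have hstep : qB p i (a + 1) = qB p i a + p i a := qB_succ i h1
  have htop : qB p i (Nv i + 1) = 1 := qB_top hB i
  have hN : 2 ≤ Nv i := hB.2.1 i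
  rcases eq_or_lt_of_le h1 with h | h
  · -- a = 1
    have h2lt : qB p i 2 < qB p i (Nv i + 1) := qB_strict hB i (by omega) (by omega) le_rfl
    have : qB p i 2 = qB p i 1 + p i 1 := qB_succ i le_rfl
    rw [← h] at *
    rw [qB_one] at this
    linarith
  · -- 1 < a
    have hq : qB p i 1 < qB p i a := qB_strict hB i le_rfl h (by omega)
    rw [qB_one] at hq
    have : qB p i (a + 1) ≤ 1 := htop ▸ qB_mono hB i (by omega) (by omega) le_rfl
    linarith

lemma coord_mem (hB : BSetup d Nv p D) (i : Fin d) {a : ℕ} {z : ℝ} (h1 : 1 ≤ a)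
    (h2 : a ≤ Nv i) (hz0 : 0 ≤ z) (hz1 : z ≤ 1) :
    0 ≤ p i a * z + qB p i a ∧ p i a * z + qB p i a ≤ 1 := by
  have hp := p_pos hB i h1 h2
  have hq0 := qB_nonneg hB i (j := a) (by omega)
  have hstep : qB p i (a + 1) = qB p i a + p i a := qB_succ i h1
  have htop : qB p i (a + 1) ≤ 1 :=
    (qB_top hB i) ▸ qB_mono hB i (by omega) (by omega) le_rfl
  constructor
  · nlinarith
  · nlinarith

lemma coord_one (hB : BSetup d Nv p D) (i : Fin d) {a : ℕ} {z : ℝ} (h1 : 1 ≤ a)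
    (h2 : a ≤ Nv i) (hz0 : 0 ≤ z) (hz1 : z ≤ 1)
    (h : p i a * z + qB p i a = 1) : a = Nv i ∧ z = 1 := by
  have hp := p_pos hB i h1 h2
  have hstep : qB p i (a + 1) = qB p i a + p i a := qB_succ i h1
  have htop : qB p i (Nv i + 1) = 1 := qB_top hB i
  have hle : qB p i (a + 1) ≤ 1 := htop ▸ qB_mono hB i (by omega) (by omega) le_rfl
  have haN : a = Nv i := by
    by_contra hne
    have : qB p i (a + 1) < qB p i (Nv i + 1) :=
      qB_strict hB i (by omega) (by omega) le_rfl
    nlinarith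
  refine ⟨haN, ?_⟩
  have : qB p i (a + 1) = 1 := by rw [haN, htop]
  nlinarith

lemma coord_zero (hB : BSetup d Nv p D) (i : Fin d) {a : ℕ} {z : ℝ} (h1 : 1 ≤ a)
    (h2 : a ≤ Nv i) (hz0 : 0 ≤ z) (hz1 : z ≤ 1)
    (h : p i a * z + qB p i a = 0) : a = 1 ∧ z = 0 := by
  have hp := p_pos hB i h1 h2
  have hq0 := qB_nonneg hB i (j := a) (by omega)
  have hq : qB p i a = 0 := by nlinarith
  have ha : a = 1 := by
    by_contra hne
    have : qB p i 1 < qB p i a := qB_strict hB i le_rfl (by omega) (by omega)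
    rw [qB_one] at this
    linarith
  exact ⟨ha, by nlinarith⟩

lemma coord_eq (hB : BSetup d Nv p D) (i : Fin d) {a b : ℕ} {z z' : ℝ}
    (ha1 : 1 ≤ a) (ha2 : a ≤ Nv i) (hb1 : 1 ≤ b) (hb2 : b ≤ Nv i)
    (hz0 : 0 ≤ z) (hz1 : z ≤ 1) (hz'0 : 0 ≤ z') (hz'1 : z' ≤ 1)
    (h : p i a * z + qB p i a = p i b * z' + qB p i b) :
    (a = b ∧ z = z') ∨ (b = a + 1 ∧ z = 1 ∧ z' = 0) ∨
      (a = b + 1 ∧ z = 0 ∧ z' = 1) := by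
  have hpa := p_pos hB i ha1 ha2
  have hpb := p_pos hB i hb1 hb2
  rcases lt_trichotomy a b with hab | hab | hab
  · right; left
    have hstep : qB p i (a + 1) = qB p i a + p i a := qB_succ i ha1
    have h1 : qB p i (a + 1) ≤ qB p i b := qB_mono hB i (by omega) (by omega) (by omega)
    -- p a z + q a ≤ q (a+1) ≤ q b ≤ p b z' + q b = p a z + q a
    have e1 : p i a * z + qB p i a ≤ qB p i (a + 1) := by nlinarith
    have e2 : qB p i b ≤ p i b * z' + qB p i b := by nlinarith
    have hz : z = 1 := by nlinarith
    have hz' : z' = 0 := by nlinarith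
    have hq : qB p i (a + 1) = qB p i b := by nlinarith
    have hba : b = a + 1 := by
      by_contra hne
      have : qB p i (a + 1) < qB p i b := qB_strict hB i (by omega) (by omega) (by omega)
      linarith
    exact ⟨hba, hz, hz'⟩
  · left
    refine ⟨hab, ?_⟩
    rw [hab] at h
    have := mul_left_cancel₀ (ne_of_gt hpb) (by linarith : p i b * z = p i b * z')
    exact this
  · right; right
    have hstep : qB p i (b + 1) = qB p i b + p i b := qB_succ i hb1
    have h1 : qB p i (b + 1) ≤ qB p i a := qB_mono hB i (by omega) (by omega) (by omega)
    have e1 : p i b * z' + qB p i b ≤ qB p i (b + 1) := by nlinarith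
    have e2 : qB p i a ≤ p i a * z + qB p i a := by nlinarith
    have hz' : z' = 1 := by nlinarith
    have hz : z = 0 := by nlinarith
    have hq : qB p i (b + 1) = qB p i a := by nlinarith
    have hba : a = b + 1 := by
      by_contra hne
      have : qB p i (b + 1) < qB p i a := qB_strict hB i (by omega) (by omega) (by omega)
      linarith
    exact ⟨hba, hz, hz'⟩

end

section
variable {d : ℕ} {Nv : Fin d → ℕ} {p : Fin d → ℕ → ℝ} {D : Finset (Fin d → ℕ)}
variable {Q : ℕ → Set (Fin d → ℝ)}

lemma mem_Q0B {x : Fin d → ℝ} : x ∈ Q0B d ↔ ∀ i, 0 ≤ x i ∧ x i ≤ 1 := by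
  simp [Q0B, Set.mem_pi, Pi.le_def, forall_and]

lemma DNonempty (hB : BSetup d Nv p D) : D.Nonempty :=
  Finset.card_pos.mp (lt_trans one_pos hB.2.2.2.2.2.1)

lemma psiB_mapsTo (hB : BSetup d Nv p D) {w : Fin d → ℕ} (hw : w ∈ D) :
    Set.MapsTo (psiB p w) (Q0B d) (Q0B d) := by
  intro x hx
  rw [mem_Q0B] at hx ⊢
  intro i
  obtain ⟨h1, h2⟩ := hB.2.2.2.2.1 w hw i
  exact coord_mem hB i h1 h2 (hx i).1 (hx i).2

lemma Qsubcube (hB : BSetup d Nv p D) (hQ0 : Q 0 = Q0B d)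
    (hQ : ∀ n, Q (n + 1) = ⋃ w ∈ D, psiB p w '' Q n) :
    ∀ n, Q n ⊆ Q0B d := by
  intro n
  induction n with
  | zero => rw [hQ0]
  | succ n ih =>
    rw [hQ]
    refine Set.iUnion₂_subset fun w hw => ?_
    exact (Set.image_mono ih).trans ((psiB_mapsTo hB hw).image_subset)

lemma Qmono (hB : BSetup d Nv p D) (hQ0 : Q 0 = Q0B d)
    (hQ : ∀ n, Q (n + 1) = ⋃ w ∈ D, psiB p w '' Q n) :
    ∀ n, Q (n + 1) ⊆ Q n := by
  intro n
  induction n with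
  | zero =>
    rw [hQ 0, hQ0]
    exact Set.iUnion₂_subset fun w hw => (psiB_mapsTo hB hw).image_subset
  | succ n ih =>
    rw [hQ (n + 1)]
    refine Set.iUnion₂_subset fun w hw => (Set.image_mono ih).trans ?_
    rw [hQ n]
    exact Set.subset_biUnion_of_mem (u := fun w => psiB p w '' Q n) hw

lemma Qle (hB : BSetup d Nv p D) (hQ0 : Q 0 = Q0B d)
    (hQ : ∀ n, Q (n + 1) = ⋃ w ∈ D, psiB p w '' Q n) :
    ∀ {k n}, k ≤ n → Q n ⊆ Q k := by
  intro k n h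
  induction n with
  | zero => rw [Nat.le_zero.mp h]
  | succ n ih =>
    rcases Nat.lt_or_ge k (n + 1) with h' | h'
    · exact (Qmono hB hQ0 hQ n).trans (ih (by omega))
    · have : k = n + 1 := by omega
      rw [this]

lemma Qnonempty (hB : BSetup d Nv p D) (hQ0 : Q 0 = Q0B d)
    (hQ : ∀ n, Q (n + 1) = ⋃ w ∈ D, psiB p w '' Q n) :
    ∀ n, (Q n).Nonempty := by
  intro n
  induction n with
  | zero =>
    rw [hQ0]
    exact ⟨fun _ => 0, mem_Q0B.mpr fun i => by norm_num⟩
  | succ n ih =>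
    obtain ⟨w, hw⟩ := DNonempty hB
    obtain ⟨x, hx⟩ := ih
    exact ⟨psiB p w x, by rw [hQ]; exact Set.mem_biUnion hw ⟨x, hx, rfl⟩⟩

lemma psiB_continuous (w : Fin d → ℕ) : Continuous (psiB p w) := by
  refine continuous_pi fun i => ?_
  exact (continuous_const.mul (continuous_apply i)).add continuous_const

lemma Qcompact (hB : BSetup d Nv p D) (hQ0 : Q 0 = Q0B d)
    (hQ : ∀ n, Q (n + 1) = ⋃ w ∈ D, psiB p w '' Q n) :
    ∀ n, IsCompact (Q n) := by
  intro n
  induction n with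
  | zero =>
    rw [hQ0]
    exact isCompact_univ_pi fun i => isCompact_Icc
  | succ n ih =>
    rw [hQ]
    exact D.isCompact_biUnion fun w _ => ih.image (psiB_continuous w)

end

/-- Per-coordinate pattern: `none` means the two points agree, `some true`
means first is 1 and second is 0, `some false` means first is 0, second is 1. -/
def Patc : Option Bool → ℝ → ℝ → Prop
  | none, y, y' => y = y'
  | some true, y, y' => y = 1 ∧ y' = 0
  | some false, y, y' => y = 0 ∧ y' = 1

def Pat {d : ℕ} (σ : Fin d → Option Bool) (y y' : Fin d → ℝ) : Prop :=
  ∀ i, Patc (σ i) (y i) (y' i)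

def Rr {d : ℕ} (Q : ℕ → Set (Fin d → ℝ)) (n : ℕ) (σ : Fin d → Option Bool) : Prop :=
  ∃ y ∈ Q n, ∃ y' ∈ Q n, Pat σ y y'

def compatc (N : ℕ) : Option Bool → Option Bool → ℕ → ℕ → Prop
  | some true, o', ai, bi => ai = N ∧ bi = 1 ∧ o' = some true
  | some false, o', ai, bi => ai = 1 ∧ bi = N ∧ o' = some false
  | none, o', ai, bi => (ai = bi ∧ o' = none) ∨ (bi = ai + 1 ∧ o' = some true) ∨
      (ai = bi + 1 ∧ o' = some false)

def compatB {d : ℕ} (Nv : Fin d → ℕ) (σ σ' : Fin d → Option Bool)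
    (a b : Fin d → ℕ) : Prop :=
  ∀ i, compatc (Nv i) (σ i) (σ' i) (a i) (b i)

section
variable {d : ℕ} {Nv : Fin d → ℕ} {p : Fin d → ℕ → ℝ} {D : Finset (Fin d → ℕ)}
variable {Q : ℕ → Set (Fin d → ℝ)}

lemma Pat_constr (hB : BSetup d Nv p D) {σ σ' : Fin d → Option Bool}
    {a b : Fin d → ℕ} (ha : ∀ i, 1 ≤ a i ∧ a i ≤ Nv i)
    (hb : ∀ i, 1 ≤ b i ∧ b i ≤ Nv i)
    (hc : compatB Nv σ σ' a b) {z z' : Fin d → ℝ}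
    (hz : z ∈ Q0B d) (hz' : z' ∈ Q0B d) (hP : Pat σ' z z') :
    Pat σ (psiB p a z) (psiB p b z') := by
  intro i
  have hzi := mem_Q0B.mp hz i
  have hz'i := mem_Q0B.mp hz' i
  have hci := hc i
  have hPi := hP i
  rw [psiB_apply, psiB_apply]
  have hqtop : p i (Nv i) * 1 + qB p i (Nv i) = 1 := by
    have := qB_succ (p := p) i (j := Nv i) (by have := hB.2.1 i; omega)
    have htop := qB_top hB i
    linarith
  have hqbot : p i 1 * 0 + qB p i 1 = 0 := by rw [qB_one]; ring
  cases hσ : σ i with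
  | some t =>
    cases t with
    | true =>
      rw [hσ] at hci
      obtain ⟨haN, hb1, hσ'⟩ := hci
      rw [hσ'] at hPi
      obtain ⟨hz1, hz'0⟩ := hPi
      constructor
      · rw [haN, hz1]; exact hqtop
      · rw [hb1, hz'0]; exact hqbot
    | false =>
      rw [hσ] at hci
      obtain ⟨ha1, hbN, hσ'⟩ := hci
      rw [hσ'] at hPi
      obtain ⟨hz0, hz'1⟩ := hPi
      constructor
      · rw [ha1, hz0]; exact hqbot
      · rw [hbN, hz'1]; exact hqtop
  | none =>
    rw [hσ] at hci
    rcases hci with ⟨hab, hσ'⟩ | ⟨hab, hσ'⟩ | ⟨hab, hσ'⟩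
    · rw [hσ'] at hPi
      show _ = _
      rw [hab, hPi]
    · -- b i = a i + 1, z i = 1, z' i = 0
      rw [hσ'] at hPi
      obtain ⟨hz1, hz'0⟩ := hPi
      show _ = _
      rw [hz1, hz'0, hab, qB_succ i (ha i).1]
      ring
    · rw [hσ'] at hPi
      obtain ⟨hz0, hz'1⟩ := hPi
      show _ = _
      rw [hz0, hz'1, hab, qB_succ i (hb i).1]
      ring

lemma Pat_extract (hB : BSetup d Nv p D) {σ : Fin d → Option Bool}
    {a b : Fin d → ℕ} (ha : ∀ i, 1 ≤ a i ∧ a i ≤ Nv i)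
    (hb : ∀ i, 1 ≤ b i ∧ b i ≤ Nv i) {z z' : Fin d → ℝ}
    (hz : z ∈ Q0B d) (hz' : z' ∈ Q0B d)
    (hP : Pat σ (psiB p a z) (psiB p b z')) :
    ∃ σ', compatB Nv σ σ' a b ∧ Pat σ' z z' := by
  classical
  refine ⟨fun i => match σ i with
    | some t => some t
    | none => if a i = b i then none else if a i < b i then some true else some false,
    fun i => ?_, fun i => ?_⟩ <;>
  · have hzi := mem_Q0B.mp hz i
    have hz'i := mem_Q0B.mp hz' i
    have hPi := hP i
    rw [psiB_apply, psiB_apply] at hPi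
    cases hσ : σ i with
    | some t =>
      rw [hσ] at hPi
      cases t with
      | true =>
        obtain ⟨h1, h0⟩ := hPi
        obtain ⟨haN, hz1⟩ := coord_one hB i (ha i).1 (ha i).2 hzi.1 hzi.2 h1
        obtain ⟨hb1, hz'0⟩ := coord_zero hB i (hb i).1 (hb i).2 hz'i.1 hz'i.2 h0
        first
        | exact ⟨haN, hb1, by simp [hσ]⟩
        | (show Patc _ _ _; simp only [hσ]; exact ⟨hz1, hz'0⟩)
      | false =>
        obtain ⟨h0, h1⟩ := hPi
        obtain ⟨ha1, hz0⟩ := coord_zero hB i (ha i).1 (ha i).2 hzi.1 hzi.2 h0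
        obtain ⟨hbN, hz'1⟩ := coord_one hB i (hb i).1 (hb i).2 hz'i.1 hz'i.2 h1
        first
        | exact ⟨ha1, hbN, by simp [hσ]⟩
        | (show Patc _ _ _; simp only [hσ]; exact ⟨hz0, hz'1⟩)
    | none =>
      rw [hσ] at hPi
      have hcase := coord_eq hB i (ha i).1 (ha i).2 (hb i).1 (hb i).2
        hzi.1 hzi.2 hz'i.1 hz'i.2 hPi
      rcases hcase with ⟨hab, hzz⟩ | ⟨hab, hz1, hz'0⟩ | ⟨hab, hz0, hz'1⟩
      · first
        | exact Or.inl ⟨hab, by simp [hσ, hab]⟩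
        | (show Patc _ _ _; simp only [hσ, if_pos hab]; exact hzz)
      · have hne : ¬ a i = b i := by omega
        have hlt : a i < b i := by omega
        first
        | exact Or.inr (Or.inl ⟨hab, by simp [hσ, hne, hlt]⟩)
        | (show Patc _ _ _; simp only [hσ, if_neg hne, if_pos hlt]; exact ⟨hz1, hz'0⟩)
      · have hne : ¬ a i = b i := by omega
        have hlt : ¬ a i < b i := by omega
        first
        | exact Or.inr (Or.inr ⟨hab, by simp [hσ, hne, hlt]⟩)
        | (show Patc _ _ _; simp only [hσ, if_neg hne, if_neg hlt]; exact ⟨hz0, hz'1⟩)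

end

section
variable {d : ℕ} {Nv : Fin d → ℕ} {p : Fin d → ℕ → ℝ} {D : Finset (Fin d → ℕ)}
variable {Q : ℕ → Set (Fin d → ℝ)}

lemma R_zero (hQ0 : Q 0 = Q0B d) (σ : Fin d → Option Bool) : Rr Q 0 σ := by
  classical
  refine ⟨fun i => if σ i = some true then 1 else 0, ?_,
    fun i => if σ i = some false then 1 else 0, ?_, ?_⟩
  · rw [hQ0, mem_Q0B]; intro i; split <;> norm_num
  · rw [hQ0, mem_Q0B]; intro i; split <;> norm_num
  · intro i
    cases hσ : σ i with
    | none => simp [Patc, hσ]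
    | some t => cases t <;> simp [Patc, hσ]

lemma R_succ_intro (hB : BSetup d Nv p D) (hQ0 : Q 0 = Q0B d)
    (hQ : ∀ n, Q (n + 1) = ⋃ w ∈ D, psiB p w '' Q n)
    {σ σ' : Fin d → Option Bool} {a b : Fin d → ℕ} (ha : a ∈ D) (hb : b ∈ D)
    (hc : compatB Nv σ σ' a b) {n : ℕ} (hR : Rr Q n σ') : Rr Q (n + 1) σ := by
  obtain ⟨z, hzQ, z', hz'Q, hP⟩ := hR
  refine ⟨psiB p a z, ?_, psiB p b z', ?_, ?_⟩
  · rw [hQ]; exact Set.mem_biUnion ha ⟨z, hzQ, rfl⟩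
  · rw [hQ]; exact Set.mem_biUnion hb ⟨z', hz'Q, rfl⟩
  · exact Pat_constr hB (hB.2.2.2.2.1 a ha) (hB.2.2.2.2.1 b hb) hc
      (Qsubcube hB hQ0 hQ n hzQ) (Qsubcube hB hQ0 hQ n hz'Q) hP

lemma R_succ_elim (hB : BSetup d Nv p D) (hQ0 : Q 0 = Q0B d)
    (hQ : ∀ n, Q (n + 1) = ⋃ w ∈ D, psiB p w '' Q n)
    {σ : Fin d → Option Bool} {n : ℕ} (hR : Rr Q (n + 1) σ) :
    ∃ a ∈ D, ∃ b ∈ D, ∃ σ', compatB Nv σ σ' a b ∧ Rr Q n σ' := by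
  obtain ⟨y, hyQ, y', hy'Q, hP⟩ := hR
  rw [hQ] at hyQ hy'Q
  obtain ⟨a, haD, z, hzQ, rfl⟩ := by simpa using hyQ
  obtain ⟨b, hbD, z', hz'Q, rfl⟩ := by simpa using hy'Q
  obtain ⟨σ', hc, hP'⟩ := Pat_extract hB (hB.2.2.2.2.1 a haD) (hB.2.2.2.2.1 b hbD)
    (Qsubcube hB hQ0 hQ n hzQ) (Qsubcube hB hQ0 hQ n hz'Q) hP
  exact ⟨a, haD, b, hbD, σ', hc, z, hzQ, z', hz'Q, hP'⟩

lemma R_mono (hB : BSetup d Nv p D) (hQ0 : Q 0 = Q0B d)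
    (hQ : ∀ n, Q (n + 1) = ⋃ w ∈ D, psiB p w '' Q n)
    {σ : Fin d → Option Bool} {k n : ℕ} (hkn : k ≤ n) (hR : Rr Q n σ) :
    Rr Q k σ := by
  obtain ⟨y, hy, y', hy', hP⟩ := hR
  exact ⟨y, Qle hB hQ0 hQ hkn hy, y', Qle hB hQ0 hQ hkn hy', hP⟩

/-- number of free coordinates -/
def freeN {d : ℕ} (σ : Fin d → Option Bool) : ℕ :=
  (Finset.univ.filter fun i => σ i = none).card

lemma compat_free_lt {σ σ' : Fin d → Option Bool} {a b : Fin d → ℕ}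
    (hc : compatB Nv σ σ' a b) (hne : σ' ≠ σ) : freeN σ' < freeN σ := by
  classical
  have hsub : (Finset.univ.filter fun i => σ' i = none) ⊆
      (Finset.univ.filter fun i => σ i = none) := by
    intro i hi
    simp only [Finset.mem_filter, Finset.mem_univ, true_and] at hi ⊢
    have hci := hc i
    cases hσ : σ i with
    | none => rfl
    | some t =>
      rw [hσ] at hci
      exfalso
      cases t with
      | true => rw [hci.2.2] at hi; exact nomatch hi
      | false => rw [hci.2.2] at hi; exact nomatch hi
  have hstrict : ∃ i, σ i = none ∧ σ' i ≠ none := by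
    by_contra hcon
    push_neg at hcon
    apply hne
    funext i
    have hci := hc i
    cases hσ : σ i with
    | none =>
      rw [hσ] at hci
      rcases hci with ⟨_, h⟩ | ⟨_, h⟩ | ⟨_, h⟩
      · rw [h]
      · rw [hcon i hσ] at h; exact nomatch h
      · rw [hcon i hσ] at h; exact nomatch h
    | some t =>
      rw [hσ] at hci
      cases t with
      | true => exact hci.2.2
      | false => exact hci.2.2
  obtain ⟨i, h1, h2⟩ := hstrict
  apply Finset.card_lt_card
  refine ⟨hsub, fun hsub' => h2 ?_⟩
  have := hsub' (by simp [h1] : i ∈ Finset.univ.filter fun i => σ i = none)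
  simpa using this

/-- Key stabilization lemma: if the pattern `σ` is realizable at level
`freeN σ + 1`, it is realizable at every level. -/
lemma R_main (hB : BSetup d Nv p D) (hQ0 : Q 0 = Q0B d)
    (hQ : ∀ n, Q (n + 1) = ⋃ w ∈ D, psiB p w '' Q n) :
    ∀ m (σ : Fin d → Option Bool), freeN σ ≤ m → Rr Q (m + 1) σ →
      ∀ n, Rr Q n σ := by
  intro m
  induction m with
  | zero =>
    intro σ hfree hR n
    obtain ⟨a, ha, b, hb, σ', hc, hR'⟩ := R_succ_elim hB hQ0 hQ hR
    have hσ : σ' = σ := by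
      by_contra hne
      have := compat_free_lt hc hne
      omega
    subst hσ
    clear hR'
    induction n with
    | zero => exact R_zero hQ0 σ'
    | succ n ih => exact R_succ_intro hB hQ0 hQ ha hb hc ih
  | succ m IH =>
    intro σ hfree hR n
    obtain ⟨a, ha, b, hb, σ', hc, hR'⟩ := R_succ_elim hB hQ0 hQ hR
    by_cases hne : σ' = σ
    · subst hne
      clear hR'
      induction n with
      | zero => exact R_zero hQ0 σ'
      | succ n ih => exact R_succ_intro hB hQ0 hQ ha hb hc ih
    · have hlt := compat_free_lt hc hne
      have hall : ∀ k, Rr Q k σ' := IH σ' (by omega) hR'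
      cases n with
      | zero => exact R_zero hQ0 σ
      | succ n => exact R_succ_intro hB hQ0 hQ ha hb hc (hall n)

end

section
variable {d : ℕ} {Nv : Fin d → ℕ} {p : Fin d → ℕ → ℝ} {D : Finset (Fin d → ℕ)}
variable {Q : ℕ → Set (Fin d → ℝ)}

lemma edge_iff (hB : BSetup d Nv p D) (hQ0 : Q 0 = Q0B d)
    (hQ : ∀ n, Q (n + 1) = ⋃ w ∈ D, psiB p w '' Q n)
    {w v : Fin d → ℕ} (hw : w ∈ D) (hv : v ∈ D) (n : ℕ) :
    ((psiB p w '' Q n) ∩ (psiB p v '' Q n)).Nonempty ↔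
      ∃ σ', compatB Nv (fun _ => none) σ' w v ∧ Rr Q n σ' := by
  constructor
  · rintro ⟨x, ⟨z, hz, hxw⟩, ⟨z', hz', hxv⟩⟩
    have hP : Pat (fun _ => none) (psiB p w z) (psiB p v z') := by
      intro i
      show psiB p w z i = psiB p v z' i
      rw [hxw, hxv]
    obtain ⟨σ', hc, hP'⟩ := Pat_extract hB (hB.2.2.2.2.1 w hw) (hB.2.2.2.2.1 v hv)
      (Qsubcube hB hQ0 hQ n hz) (Qsubcube hB hQ0 hQ n hz') hP
    exact ⟨σ', hc, z, hz, z', hz', hP'⟩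
  · rintro ⟨σ', hc, z, hz, z', hz', hP⟩
    have hPat := Pat_constr hB (hB.2.2.2.2.1 w hw) (hB.2.2.2.2.1 v hv) hc
      (Qsubcube hB hQ0 hQ n hz) (Qsubcube hB hQ0 hQ n hz') hP
    have heq : psiB p w z = psiB p v z' := funext fun i => hPat i
    exact ⟨psiB p w z, ⟨z, hz, rfl⟩, ⟨z', hz', heq.symm⟩⟩

lemma edge_stable (hB : BSetup d Nv p D) (hQ0 : Q 0 = Q0B d)
    (hQ : ∀ n, Q (n + 1) = ⋃ w ∈ D, psiB p w '' Q n)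
    {w v : Fin d → ℕ} (hw : w ∈ D) (hv : v ∈ D)
    (hE : ((psiB p w '' Q d) ∩ (psiB p v '' Q d)).Nonempty) (n : ℕ) :
    ((psiB p w '' Q n) ∩ (psiB p v '' Q n)).Nonempty := by
  classical
  by_cases hwv : w = v
  · subst hwv
    obtain ⟨x, hx⟩ := Qnonempty hB hQ0 hQ n
    exact ⟨psiB p w x, ⟨x, hx, rfl⟩, ⟨x, hx, rfl⟩⟩
  · obtain ⟨σ', hc, hR⟩ := (edge_iff hB hQ0 hQ hw hv d).mp hE
    obtain ⟨i, hi⟩ := Function.ne_iff.mp hwv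
    have hσi : σ' i ≠ none := by
      have hci := hc i
      rcases hci with ⟨h, _⟩ | ⟨_, h⟩ | ⟨_, h⟩
      · exact absurd h hi
      · rw [h]; exact fun h' => nomatch h'
      · rw [h]; exact fun h' => nomatch h'
    have hfree : freeN σ' + 1 ≤ d := by
      have hsub : (Finset.univ.filter fun j => σ' j = none) ⊆ Finset.univ.erase i := by
        intro j hj
        simp only [Finset.mem_filter, Finset.mem_univ, true_and] at hj
        refine Finset.mem_erase.mpr ⟨?_, Finset.mem_univ j⟩
        rintro rfl; exact hσi hj
      have hcard := Finset.card_le_card hsub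
      rw [Finset.card_erase_of_mem (Finset.mem_univ i)] at hcard
      simp only [Finset.card_univ, Fintype.card_fin] at hcard
      have hd : 2 ≤ d := hB.1
      unfold freeN
      omega
    have hall : ∀ k, Rr Q k σ' :=
      R_main hB hQ0 hQ (freeN σ') σ' le_rfl (R_mono hB hQ0 hQ hfree hR)
    exact (edge_iff hB hQ0 hQ hw hv n).mpr ⟨σ', hc, hall n⟩

end

/-- In a T2 space, if a finite union of nonempty compact sets is preconnected,
then any two indices are connected by a chain of pairwise-intersecting sets. -/
lemma reach_of_preconnected {α ι : Type*} [TopologicalSpace α] [T2Space α]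
    [Finite ι] (S : ι → Set α) (hS : ∀ i, IsCompact (S i))
    (hne : ∀ i, (S i).Nonempty) (hconn : IsPreconnected (⋃ i, S i)) (a b : ι) :
    Relation.ReflTransGen (fun i j => (S i ∩ S j).Nonempty) a b := by
  classical
  by_contra hab
  set Re := fun i j : ι => (S i ∩ S j).Nonempty with hRe
  set T : Set ι := {j | Relation.ReflTransGen Re a j} with hT
  have hA : IsClosed (⋃ j ∈ T, S j) :=
    Set.Finite.isClosed_biUnion (Set.toFinite T) fun j _ => (hS j).isClosed
  have hBc : IsClosed (⋃ j ∈ Tᶜ, S j) :=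
    Set.Finite.isClosed_biUnion (Set.toFinite Tᶜ) fun j _ => (hS j).isClosed
  have hcover : (⋃ i, S i) ⊆ (⋃ j ∈ T, S j) ∪ (⋃ j ∈ Tᶜ, S j) := by
    intro x hx
    obtain ⟨i, hi⟩ := Set.mem_iUnion.mp hx
    by_cases hiT : i ∈ T
    · exact Or.inl (Set.mem_biUnion hiT hi)
    · exact Or.inr (Set.mem_biUnion hiT hi)
  have hAne : ((⋃ i, S i) ∩ ⋃ j ∈ T, S j).Nonempty := by
    obtain ⟨x, hx⟩ := hne a
    exact ⟨x, Set.mem_iUnion.mpr ⟨a, hx⟩,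
      Set.mem_biUnion (Relation.ReflTransGen.refl) hx⟩
  have hBne : ((⋃ i, S i) ∩ ⋃ j ∈ Tᶜ, S j).Nonempty := by
    obtain ⟨x, hx⟩ := hne b
    exact ⟨x, Set.mem_iUnion.mpr ⟨b, hx⟩, Set.mem_biUnion hab hx⟩
  obtain ⟨x, -, hxA, hxB⟩ :=
    isPreconnected_closed_iff.mp hconn _ _ hA hBc hcover hAne hBne
  obtain ⟨j, hjT, hxj⟩ := Set.mem_iUnion₂.mp hxA
  obtain ⟨k, hkT, hxk⟩ := Set.mem_iUnion₂.mp hxB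
  exact hkT (Relation.ReflTransGen.tail hjT ⟨x, hxj, hxk⟩)

section
variable {d : ℕ} {Nv : Fin d → ℕ} {p : Fin d → ℕ → ℝ} {D : Finset (Fin d → ℕ)}
variable {Q : ℕ → Set (Fin d → ℝ)} {K : Set (Fin d → ℝ)}

lemma Q0B_isConnected : IsConnected (Q0B d) := by
  refine Convex.isConnected ?_ ⟨fun _ => 0, mem_Q0B.mpr fun i => by norm_num⟩
  exact convex_pi fun i _ => convex_Icc 0 1

lemma Qconn_all (hB : BSetup d Nv p D) (hQ0 : Q 0 = Q0B d)
    (hQ : ∀ n, Q (n + 1) = ⋃ w ∈ D, psiB p w '' Q n)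
    (hreach : ∀ n, ∀ a b : {w // w ∈ D}, Relation.ReflTransGen
      (fun a b : {w // w ∈ D} =>
        ((psiB p a.1 '' Q n) ∩ (psiB p b.1 '' Q n)).Nonempty) a b) :
    ∀ n, IsConnected (Q n) := by
  have hne : Nonempty {w // w ∈ D} := by
    obtain ⟨w, hw⟩ := DNonempty hB
    exact ⟨⟨w, hw⟩⟩
  intro n
  induction n with
  | zero => rw [hQ0]; exact Q0B_isConnected
  | succ n ih =>
    rw [hQ n]
    have hrw : (⋃ w ∈ D, psiB p w '' Q n) =
        ⋃ a : {w // w ∈ D}, psiB p a.1 '' Q n := by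
      ext x; simp
    rw [hrw]
    exact IsConnected.iUnion_of_reflTransGen
      (fun a => ih.image _ (psiB_continuous _).continuousOn) (hreach n)

lemma KsubQ0 (hB : BSetup d Nv p D) (hK : IsBAttractor p D K) : K ⊆ Q0B d := by
  intro x hxK
  rw [mem_Q0B]
  intro i
  have hcont : ContinuousOn (fun x : Fin d → ℝ => x i) K := (continuous_apply i).continuousOn
  constructor
  · -- min
    obtain ⟨x1, hx1K, hmin⟩ := hK.2.1.exists_isMinOn hK.1 hcont
    have hx1 : x1 ∈ ⋃ w ∈ D, psiB p w '' K := hK.2.2 ▸ hx1K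
    obtain ⟨w, hw, y, hyK, rfl⟩ := by simpa using hx1
    obtain ⟨h1, h2⟩ := hB.2.2.2.2.1 w hw i
    have hp0 := p_pos hB i h1 h2
    have hp1 := p_lt_one hB i h1 h2
    have hq0 := qB_nonneg hB i (j := w i) (by omega)
    have hyge : psiB p w y i ≤ y i := isMinOn_iff.mp hmin y hyK
    have hself : 0 ≤ psiB p w y i := by
      rw [psiB_apply] at hyge ⊢
      nlinarith
    calc (0:ℝ) ≤ psiB p w y i := hself
      _ ≤ x i := isMinOn_iff.mp hmin x hxK
  · -- max
    obtain ⟨x0, hx0K, hmax⟩ := hK.2.1.exists_isMaxOn hK.1 hcont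
    have hx0 : x0 ∈ ⋃ w ∈ D, psiB p w '' K := hK.2.2 ▸ hx0K
    obtain ⟨w, hw, y, hyK, rfl⟩ := by simpa using hx0
    obtain ⟨h1, h2⟩ := hB.2.2.2.2.1 w hw i
    have hp0 := p_pos hB i h1 h2
    have hp1 := p_lt_one hB i h1 h2
    have hqp : qB p i (w i) + p i (w i) ≤ 1 := by
      have hstep : qB p i (w i + 1) = qB p i (w i) + p i (w i) := qB_succ i h1
      have := qB_top hB i ▸ qB_mono hB i (j := w i + 1) (by omega) (by omega) le_rfl
      linarith
    have hyle : y i ≤ psiB p w y i := isMaxOn_iff.mp hmax y hyK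
    have hself : psiB p w y i ≤ 1 := by
      rw [psiB_apply] at hyle ⊢
      nlinarith
    calc x i ≤ psiB p w y i := isMaxOn_iff.mp hmax x hxK
      _ ≤ 1 := hself

lemma KsubQ (hB : BSetup d Nv p D) (hQ0 : Q 0 = Q0B d)
    (hQ : ∀ n, Q (n + 1) = ⋃ w ∈ D, psiB p w '' Q n)
    (hK : IsBAttractor p D K) : ∀ n, K ⊆ Q n := by
  intro n
  induction n with
  | zero => rw [hQ0]; exact KsubQ0 hB hK
  | succ n ih =>
    rw [hQ n]
    intro x hx
    have hx' : x ∈ ⋃ w ∈ D, psiB p w '' K := hK.2.2 ▸ hx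
    obtain ⟨w, hw, y, hyK, rfl⟩ := by simpa using hx'
    exact Set.mem_biUnion hw ⟨y, ih hyK, rfl⟩

end

section
variable {d : ℕ} {Nv : Fin d → ℕ} {p : Fin d → ℕ → ℝ} {D : Finset (Fin d → ℕ)}
variable {Q : ℕ → Set (Fin d → ℝ)} {K : Set (Fin d → ℝ)}

lemma psiBW_nil (x : Fin d → ℝ) : psiBW p [] x = x := rfl

lemma psiBW_cons (w : Fin d → ℕ) (l : List (Fin d → ℕ)) (x : Fin d → ℝ) :
    psiBW p (w :: l) x = psiB p w (psiBW p l x) := rfl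

lemma ratio_exists (hB : BSetup d Nv p D) :
    ∃ r : ℝ, 0 ≤ r ∧ r < 1 ∧ ∀ w ∈ D, ∀ i, p i (w i) ≤ r := by
  classical
  have hd : 2 ≤ d := hB.1
  have i0 : Fin d := ⟨0, by omega⟩
  obtain ⟨w0, hw0⟩ := DNonempty hB
  set S : Finset ℝ := (D ×ˢ (Finset.univ : Finset (Fin d))).image
    (fun wi => p wi.2 (wi.1 wi.2)) with hS
  have hmem0 : p i0 (w0 i0) ∈ S := Finset.mem_image.mpr
    ⟨(w0, i0), Finset.mem_product.mpr ⟨hw0, Finset.mem_univ _⟩, rfl⟩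
  have hSne : S.Nonempty := ⟨_, hmem0⟩
  refine ⟨S.max' hSne, ?_, ?_, ?_⟩
  · have h1 := Finset.le_max' S _ hmem0
    have hpos := p_pos hB i0 (hB.2.2.2.2.1 w0 hw0 i0).1 (hB.2.2.2.2.1 w0 hw0 i0).2
    linarith
  · rw [Finset.max'_lt_iff]
    intro x hx
    obtain ⟨⟨w, i⟩, hmem, rfl⟩ := Finset.mem_image.mp hx
    obtain ⟨hwD, -⟩ := Finset.mem_product.mp hmem
    exact p_lt_one hB i (hB.2.2.2.2.1 w hwD i).1 (hB.2.2.2.2.1 w hwD i).2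
  · intro w hw i
    exact Finset.le_max' S _ (Finset.mem_image.mpr
      ⟨(w, i), Finset.mem_product.mpr ⟨hw, Finset.mem_univ _⟩, rfl⟩)

lemma psiBW_dist (hB : BSetup d Nv p D) {r : ℝ} (hr0 : 0 ≤ r)
    (hr : ∀ w ∈ D, ∀ i, p i (w i) ≤ r) :
    ∀ (l : List (Fin d → ℕ)), (∀ w ∈ l, w ∈ D) → ∀ (y z : Fin d → ℝ) (i : Fin d),
      |psiBW p l y i - psiBW p l z i| ≤ r ^ l.length * |y i - z i| := by
  intro l
  induction l with
  | nil => intro _ y z i; simp [psiBW_nil]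
  | cons w l ih =>
    intro hl y z i
    have hw : w ∈ D := hl w List.mem_cons_self
    have hl' : ∀ w ∈ l, w ∈ D := fun v hv => hl v (List.mem_cons_of_mem w hv)
    rw [psiBW_cons, psiBW_cons, psiB_apply, psiB_apply]
    have : p i (w i) * psiBW p l y i + qB p i (w i) -
        (p i (w i) * psiBW p l z i + qB p i (w i)) =
        p i (w i) * (psiBW p l y i - psiBW p l z i) := by ring
    rw [this, abs_mul]
    have hp0 : 0 ≤ p i (w i) :=
      le_of_lt (p_pos hB i (hB.2.2.2.2.1 w hw i).1 (hB.2.2.2.2.1 w hw i).2)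
    have habs : |p i (w i)| = p i (w i) := abs_of_nonneg hp0
    rw [habs]
    have hih := ih hl' y z i
    have hpr : p i (w i) ≤ r := hr w hw i
    have h1 : p i (w i) * |psiBW p l y i - psiBW p l z i| ≤
        r * (r ^ l.length * |y i - z i|) := by
      have h0 : 0 ≤ |psiBW p l y i - psiBW p l z i| := abs_nonneg _
      nlinarith [abs_nonneg (y i - z i), pow_nonneg hr0 l.length]
    calc p i (w i) * |psiBW p l y i - psiBW p l z i| ≤
          r * (r ^ l.length * |y i - z i|) := h1
      _ = r ^ (w :: l).length * |y i - z i| := by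
          rw [List.length_cons, pow_succ]; ring

lemma Qwords (hB : BSetup d Nv p D) (hQ0 : Q 0 = Q0B d)
    (hQ : ∀ n, Q (n + 1) = ⋃ w ∈ D, psiB p w '' Q n) :
    ∀ n, Q n = ⋃ l ∈ BWords D n, psiBW p l '' Q0B d := by
  intro n
  induction n with
  | zero =>
    have hW : BWords D 0 = {([] : List (Fin d → ℕ))} := by
      ext l
      simp only [BWords, Set.mem_setOf_eq, Set.mem_singleton_iff, List.length_eq_zero_iff]
      constructor
      · rintro ⟨h, -⟩; exact h
      · rintro rfl; simp
    rw [hQ0, hW, Set.biUnion_singleton]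
    ext x
    constructor
    · intro hx; exact ⟨x, hx, rfl⟩
    · rintro ⟨y, hy, h⟩
      have hyx : y = x := h
      rwa [← hyx]
  | succ n ih =>
    rw [hQ n, ih]
    ext x
    simp only [Set.mem_iUnion, Set.mem_image, exists_prop]
    constructor
    · rintro ⟨w, hw, y, ⟨l, hl, z, hz, rfl⟩, rfl⟩
      refine ⟨w :: l, ⟨by simp [BWords] at hl ⊢; exact ⟨hl.1, hw, hl.2⟩, z, hz, ?_⟩⟩
      rw [psiBW_cons]
    · rintro ⟨l, hl, z, hz, rfl⟩
      obtain ⟨hlen, hmem⟩ := hl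
      cases l with
      | nil => simp at hlen
      | cons w l' =>
        refine ⟨w, hmem w List.mem_cons_self, psiBW p l' z,
          ⟨l', ⟨by simpa using hlen, fun v hv => hmem v (List.mem_cons_of_mem w hv)⟩,
            z, hz, rfl⟩, ?_⟩
        rw [psiBW_cons]

lemma psiBW_mapsK (hK : IsBAttractor p D K) :
    ∀ (l : List (Fin d → ℕ)), (∀ w ∈ l, w ∈ D) → ∀ y ∈ K, psiBW p l y ∈ K := by
  intro l
  induction l with
  | nil => intro _ y hy; rwa [psiBW_nil]
  | cons w l ih =>
    intro hl y hy
    rw [psiBW_cons]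
    have hmem : psiBW p l y ∈ K := ih (fun v hv => hl v (List.mem_cons_of_mem w hv)) y hy
    have hw : w ∈ D := hl w List.mem_cons_self
    have : psiB p w (psiBW p l y) ∈ ⋃ w ∈ D, psiB p w '' K :=
      Set.mem_biUnion hw ⟨psiBW p l y, hmem, rfl⟩
    rwa [← hK.2.2] at this

lemma iInterQ_subK (hB : BSetup d Nv p D) (hQ0 : Q 0 = Q0B d)
    (hQ : ∀ n, Q (n + 1) = ⋃ w ∈ D, psiB p w '' Q n)
    (hK : IsBAttractor p D K) : (⋂ n, Q n) ⊆ K := by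
  intro x hx
  have hKcl : IsClosed K := hK.2.1.isClosed
  rw [← hKcl.closure_eq]
  rw [Metric.mem_closure_iff]
  intro ε hε
  obtain ⟨r, hr0, hr1, hrb⟩ := ratio_exists hB
  obtain ⟨n, hn⟩ := exists_pow_lt_of_lt_one hε hr1
  have hxn : x ∈ Q n := Set.mem_iInter.mp hx n
  rw [Qwords hB hQ0 hQ n] at hxn
  obtain ⟨l, hl, y, hy, rfl⟩ := by simpa using hxn
  obtain ⟨hlen, hmem⟩ := hl
  obtain ⟨k0, hk0⟩ := hK.1
  refine ⟨psiBW p l k0, psiBW_mapsK hK l hmem k0 hk0, ?_⟩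
  rw [dist_pi_lt_iff hε]
  intro i
  rw [Real.dist_eq]
  have hbnd := psiBW_dist hB hr0 hrb l hmem y k0 i
  have hy1 := mem_Q0B.mp hy i
  have hk01 := mem_Q0B.mp (KsubQ0 hB hK hk0) i
  have habs1 : |y i - k0 i| ≤ 1 := by
    rw [abs_le]; constructor <;> linarith [hy1.1, hy1.2, hk01.1, hk01.2]
  have h2 : r ^ l.length * |y i - k0 i| ≤ r ^ n := by
    rw [hlen]
    nlinarith [pow_nonneg hr0 n, abs_nonneg (y i - k0 i)]
  linarith

end

theorem stmt19 (d : ℕ) (Nv : Fin d → ℕ) (p : Fin d → ℕ → ℝ)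
    (D : Finset (Fin d → ℕ)) (hB : BSetup d Nv p D)
    (K : Set (Fin d → ℝ)) (hK : IsBAttractor p D K)
    (Q : ℕ → Set (Fin d → ℝ)) (hQ0 : Q 0 = Q0B d)
    (hQ : ∀ n, Q (n + 1) = ⋃ w ∈ D, psiB p w '' Q n) :
    IsConnected K ↔ IsConnected (Q (d + 1)) := by
  classical
  have hDne := DNonempty hB
  haveI hsubne : Nonempty {w // w ∈ D} := ⟨⟨hDne.choose, hDne.choose_spec⟩⟩
  constructor
  · intro hKconn
    have hKU : (⋃ a : {w // w ∈ D}, psiB p a.1 '' K) = K := by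
      conv_rhs => rw [hK.2.2]
      ext x; simp
    have hreachK : ∀ a b : {w // w ∈ D}, Relation.ReflTransGen
        (fun a b : {w // w ∈ D} =>
          ((psiB p a.1 '' K) ∩ (psiB p b.1 '' K)).Nonempty) a b := by
      intro a b
      apply reach_of_preconnected
      · intro c; exact hK.2.1.image (psiB_continuous _)
      · intro c; exact hK.1.image _
      · rw [hKU]; exact hKconn.isPreconnected
    have hreach : ∀ n, ∀ a b : {w // w ∈ D}, Relation.ReflTransGen
        (fun a b : {w // w ∈ D} =>
          ((psiB p a.1 '' Q n) ∩ (psiB p b.1 '' Q n)).Nonempty) a b := by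
      intro n a b
      refine Relation.ReflTransGen.mono ?_ a b (hreachK a b)
      intro c e hce
      exact Set.Nonempty.mono (Set.inter_subset_inter
        (Set.image_mono (KsubQ hB hQ0 hQ hK n))
        (Set.image_mono (KsubQ hB hQ0 hQ hK n))) hce
    exact Qconn_all hB hQ0 hQ hreach (d + 1)
  · intro hQconn
    have hQU : (⋃ a : {w // w ∈ D}, psiB p a.1 '' Q d) = Q (d + 1) := by
      rw [hQ d]; ext x; simp
    have hreachd : ∀ a b : {w // w ∈ D}, Relation.ReflTransGen
        (fun a b : {w // w ∈ D} =>
          ((psiB p a.1 '' Q d) ∩ (psiB p b.1 '' Q d)).Nonempty) a b := by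
      intro a b
      apply reach_of_preconnected
      · intro c; exact (Qcompact hB hQ0 hQ d).image (psiB_continuous _)
      · intro c; exact (Qnonempty hB hQ0 hQ d).image _
      · rw [hQU]; exact hQconn.isPreconnected
    have hreach : ∀ n, ∀ a b : {w // w ∈ D}, Relation.ReflTransGen
        (fun a b : {w // w ∈ D} =>
          ((psiB p a.1 '' Q n) ∩ (psiB p b.1 '' Q n)).Nonempty) a b := by
      intro n a b
      exact Relation.ReflTransGen.mono
        (fun c e hce => edge_stable hB hQ0 hQ c.2 e.2 hce n) a b (hreachd a b)
    have hQcAll := Qconn_all hB hQ0 hQ hreach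
    have hKQ : K = ⋂ n, Q n :=
      Set.Subset.antisymm (Set.subset_iInter fun n => KsubQ hB hQ0 hQ hK n)
        (iInterQ_subK hB hQ0 hQ hK)
    refine ⟨hK.1, ?_⟩
    intro U V hU hV hcov hUne hVne
    by_contra hcon
    rw [Set.not_nonempty_iff_eq_empty] at hcon
    have hKU' : K ∩ U = K \ V := by
      ext x
      constructor
      · rintro ⟨hxK, hxU⟩
        refine ⟨hxK, fun hxV => ?_⟩
        have hx : x ∈ K ∩ (U ∩ V) := ⟨hxK, hxU, hxV⟩
        rw [hcon] at hx; exact hx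
      · rintro ⟨hxK, hxV⟩
        rcases hcov hxK with h | h
        · exact ⟨hxK, h⟩
        · exact absurd h hxV
    have hKV' : K ∩ V = K \ U := by
      ext x
      constructor
      · rintro ⟨hxK, hxV⟩
        refine ⟨hxK, fun hxU => ?_⟩
        have hx : x ∈ K ∩ (U ∩ V) := ⟨hxK, hxU, hxV⟩
        rw [hcon] at hx; exact hx
      · rintro ⟨hxK, hxU⟩
        rcases hcov hxK with h | h
        · exact absurd h hxU
        · exact ⟨hxK, h⟩
    have hcU : IsCompact (K ∩ U) := hKU' ▸ hK.2.1.diff hV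
    have hcV : IsCompact (K ∩ V) := hKV' ▸ hK.2.1.diff hU
    have hdisj : Disjoint (K ∩ U) (K ∩ V) := by
      rw [Set.disjoint_left]
      rintro x ⟨hxK, hxU⟩ ⟨-, hxV⟩
      have hx : x ∈ K ∩ (U ∩ V) := ⟨hxK, hxU, hxV⟩
      rw [hcon] at hx; exact hx
    obtain ⟨U', V', hU', hV', hsU, hsV, hUV'⟩ :=
      SeparatedNhds.of_isCompact_isCompact hcU hcV hdisj
    have hKsub : K ⊆ U' ∪ V' := by
      intro x hx
      rcases hcov hx with h | h
      · exact Or.inl (hsU ⟨hx, h⟩)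
      · exact Or.inr (hsV ⟨hx, h⟩)
    have hN : ∃ N, Q N ⊆ U' ∪ V' := by
      by_contra hno
      push_neg at hno
      have hne : ∀ N, (Q N ∩ (U' ∪ V')ᶜ).Nonempty := by
        intro N
        obtain ⟨x, hx1, hx2⟩ := Set.not_subset.mp (hno N)
        exact ⟨x, hx1, hx2⟩
      have hcl : ∀ N, IsClosed (Q N ∩ (U' ∪ V')ᶜ) := fun N =>
        ((Qcompact hB hQ0 hQ N).isClosed).inter (hU'.union hV').isClosed_compl
      have hdecr : ∀ N, Q (N + 1) ∩ (U' ∪ V')ᶜ ⊆ Q N ∩ (U' ∪ V')ᶜ := fun N =>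
        Set.inter_subset_inter_left _ (Qmono hB hQ0 hQ N)
      have h0 : IsCompact (Q 0 ∩ (U' ∪ V')ᶜ) :=
        (Qcompact hB hQ0 hQ 0).inter_right (hU'.union hV').isClosed_compl
      obtain ⟨x, hx⟩ := IsCompact.nonempty_iInter_of_sequence_nonempty_isCompact_isClosed
        _ hdecr hne h0 hcl
      have hxK : x ∈ K := by
        rw [hKQ]
        exact Set.mem_iInter.mpr fun n => ((Set.mem_iInter.mp hx) n).1
      have hxn : x ∉ U' ∪ V' := ((Set.mem_iInter.mp hx) 0).2
      exact hxn (hKsub hxK)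
    obtain ⟨N, hNsub⟩ := hN
    have hQN := (hQcAll N).isPreconnected
    have hU'ne : (Q N ∩ U').Nonempty := by
      obtain ⟨x, hxK, hxU⟩ := hUne
      exact ⟨x, KsubQ hB hQ0 hQ hK N hxK, hsU ⟨hxK, hxU⟩⟩
    have hV'ne : (Q N ∩ V').Nonempty := by
      obtain ⟨x, hxK, hxV⟩ := hVne
      exact ⟨x, KsubQ hB hQ0 hQ hK N hxK, hsV ⟨hxK, hxV⟩⟩
    obtain ⟨x, -, hx1, hx2⟩ := hQN U' V' hU' hV' hNsub hU'ne hV'ne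
    exact (Set.disjoint_left.mp hUV' hx1) hx2
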